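/- arXiv:1412.5966 — 2 statements merged into one kernel-verified Lean document; each statement's English description precedes it below -/
import Mathlib

section
/- On the real polynomial ring ℝ[x_1,…,x_n], the Moyal–Weyl star product associated with a constant antisymmetric matrix π is a formal star product in the sense of Bayen–Flato–Fronsdal–Lichnerowicz–Sternheimer: (i) it is associative, (f ⋆ g) ⋆ h = f ⋆ (g ⋆ h); (ii) its zeroth-order term is the ordinary product, m_0(f,g) = f·g; (iii) 1 ⋆ f = f = f ⋆ 1; and (iv) the first-order term of the star commutator reproduces the constant Poisson bracket: the t-coefficient of f ⋆ g − g ⋆ f equals 2·Σ_{i,j} π^{ij} (∂f/∂x_i)(∂g/∂x_j). -/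
/-!
Realize `f ⊗ g ⊗ h` as the polynomial `f(x⁰) g(x¹) h(x²)` in three copies of the variables, and
the product map as `merge`, which sets every copy equal to `x`. With `∂ᵢ^S` the sum over the
copies in `S` of the derivatives in `x_i` and `P_ST = Σ π^{ij} ∂ᵢ^S ∂ⱼ^T`, one has
`k! m_k(merge K, merge L) = merge (P_ST^k (K L))` whenever `K` and `L` depend only on disjoint
sets `S` and `T` of copies. Hence the `t^l`-coefficients of `(f ⋆ g) ⋆ h` and `f ⋆ (g ⋆ h)` are
those of `exp(P₀₂ + P₁₂) exp(P₀₁)` and `exp(P₀₁ + P₀₂) exp(P₁₂)`, applied to `f(x⁰) g(x¹) h(x²)`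
and merged. Constant-coefficient differential operators commute, so both exponentials equal
`exp(P₀₁ + P₀₂ + P₁₂)`.
-/

open MvPolynomial

/-- Iterated formal partial derivative of a polynomial along a list of indices. -/
noncomputable def pdSeqP {n : ℕ} : List (Fin n) → MvPolynomial (Fin n) ℝ → MvPolynomial (Fin n) ℝ
  | [], f => f
  | i :: l, f => MvPolynomial.pderiv i (pdSeqP l f)

/-- The `k`-th Moyal–Weyl bidifferential operator on `ℝ[x_1,…,x_n]` with constant
coefficient matrix `π`:
`m_k(f,g) = (1/k!) Σ_{I,J} π^{i₁j₁}⋯π^{i_k j_k} (∂_I f)(∂_J g)`. -/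
noncomputable def moyalP {n : ℕ} (π : Fin n → Fin n → ℝ) (k : ℕ)
    (f g : MvPolynomial (Fin n) ℝ) : MvPolynomial (Fin n) ℝ :=
  MvPolynomial.C (1 / (Nat.factorial k : ℝ)) *
    ∑ I : Fin k → Fin n, ∑ J : Fin k → Fin n,
      MvPolynomial.C (∏ l : Fin k, π (I l) (J l)) *
        pdSeqP (List.ofFn I) f * pdSeqP (List.ofFn J) g

/-- The Moyal–Weyl star product `f ⋆ g = Σ_k t^k m_k(f,g)`, as a formal power
series in the deformation parameter `t` with polynomial coefficients. -/
noncomputable def starP {n : ℕ} (π : Fin n → Fin n → ℝ)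
    (f g : MvPolynomial (Fin n) ℝ) : PowerSeries (MvPolynomial (Fin n) ℝ) :=
  PowerSeries.mk fun k => moyalP π k f g

open Finset

theorem MvPolynomial.pderiv_pderiv_comm {R σ : Type*} [CommRing R] (i j : σ)
    (f : MvPolynomial σ R) : pderiv i (pderiv j f) = pderiv j (pderiv i f) := by
  have hbracket : ⁅pderiv i, pderiv j⁆ = (0 : Derivation R (MvPolynomial σ R) _) :=
    derivation_ext fun k => by
      classical
      rw [Derivation.commutator_apply, pderiv_X, pderiv_X, Pi.single_apply, Pi.single_apply]
      split_ifs <;> simp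
  rw [← sub_eq_zero, ← Derivation.commutator_apply, hbracket, Derivation.zero_apply]

theorem Commute.inv_factorial_smul_add_pow {𝕜 A : Type*} [Field 𝕜] [CharZero 𝕜] [Ring A]
    [Algebra 𝕜 A] {x y : A} (h : Commute x y) (l : ℕ) :
    ∑ p ∈ antidiagonal l, ((p.1.factorial : 𝕜)⁻¹ • x ^ p.1) * ((p.2.factorial : 𝕜)⁻¹ • y ^ p.2)
      = (l.factorial : 𝕜)⁻¹ • (x + y) ^ l := by
  rw [h.add_pow', smul_sum]
  refine sum_congr rfl fun p hp => ?_
  obtain rfl := mem_antidiagonal.mp hp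
  rw [smul_mul_smul_comm, ← Nat.cast_smul_eq_nsmul 𝕜, smul_smul,
    Nat.cast_choose 𝕜 (Nat.le_add_right p.1 p.2), Nat.add_sub_cancel_left]
  congr 1
  have : ((p.1 + p.2).factorial : 𝕜) ≠ 0 := Nat.cast_ne_zero.mpr (Nat.factorial_ne_zero _)
  field_simp

theorem Fin.sum_pi_succ_eq_sum_snoc {α M : Type*} [Fintype α] [AddCommMonoid M] {k : ℕ}
    (F : (Fin (k + 1) → α) → M) :
    ∑ I, F I = ∑ a, ∑ I : Fin k → α, F (Fin.snoc I a) := by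
  rw [← (Fin.snocEquiv fun _ => α).sum_comp, Fintype.sum_prod_type]
  rfl

namespace MoyalWeyl

variable {R ι σ τ : Type*} [CommRing R]

variable (R τ) in
noncomputable def constCoeffDiffOps : Subalgebra R (Module.End R (MvPolynomial τ R)) :=
  Algebra.adjoin R (Set.range fun p => (pderiv p).toLinearMap)

theorem pderiv_mem_constCoeffDiffOps (p : τ) : (pderiv p).toLinearMap ∈ constCoeffDiffOps R τ :=
  Algebra.subset_adjoin ⟨p, rfl⟩

theorem commute_pderiv_of_mem_constCoeffDiffOps {A : Module.End R (MvPolynomial τ R)}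
    (hA : A ∈ constCoeffDiffOps R τ) (p : τ) : Commute (pderiv p).toLinearMap A :=
  Algebra.commute_of_mem_adjoin_of_forall_mem_commute hA <| by
    rintro _ ⟨q, rfl⟩
    exact LinearMap.ext fun f => pderiv_pderiv_comm p q f

theorem commute_of_mem_constCoeffDiffOps {A B : Module.End R (MvPolynomial τ R)}
    (hA : A ∈ constCoeffDiffOps R τ) (hB : B ∈ constCoeffDiffOps R τ) : Commute A B :=
  Algebra.commute_of_mem_adjoin_of_forall_mem_commute hB <| by
    rintro _ ⟨p, rfl⟩
    exact (commute_pderiv_of_mem_constCoeffDiffOps hA p).symm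

noncomputable def embed (s : ι) : MvPolynomial σ R →ₐ[R] MvPolynomial (ι × σ) R :=
  rename (Prod.mk s)

noncomputable def merge : MvPolynomial (ι × σ) R →ₐ[R] MvPolynomial σ R :=
  rename Prod.snd

noncomputable def pderivOn (S : Finset ι) (i : σ) : Module.End R (MvPolynomial (ι × σ) R) :=
  ∑ s ∈ S, (pderiv (s, i)).toLinearMap

noncomputable def poissonOp [Fintype σ] (π : σ → σ → R) (S T : Finset ι) :
    Module.End R (MvPolynomial (ι × σ) R) :=
  ∑ i, ∑ j, π i j • (pderivOn S i * pderivOn T j)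

def DependsOnlyOn (S : Finset ι) (K : MvPolynomial (ι × σ) R) : Prop :=
  ∀ s ∉ S, ∀ i, pderiv (s, i) K = 0

theorem pderivOn_apply (S : Finset ι) (i : σ) (K : MvPolynomial (ι × σ) R) :
    pderivOn S i K = ∑ s ∈ S, pderiv (s, i) K :=
  LinearMap.sum_apply _ _ _

theorem pderivOn_mul (S : Finset ι) (i : σ) (K L : MvPolynomial (ι × σ) R) :
    pderivOn S i (K * L) = pderivOn S i K * L + K * pderivOn S i L := by
  simp only [pderivOn_apply, pderiv_mul, sum_add_distrib, sum_mul, mul_sum]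

theorem pderivOn_mem_constCoeffDiffOps (S : Finset ι) (i : σ) :
    pderivOn (R := R) S i ∈ constCoeffDiffOps R (ι × σ) :=
  Subalgebra.sum_mem _ fun s _ => pderiv_mem_constCoeffDiffOps (s, i)

theorem poissonOp_mem_constCoeffDiffOps [Fintype σ] (π : σ → σ → R) (S T : Finset ι) :
    poissonOp π S T ∈ constCoeffDiffOps R (ι × σ) :=
  Subalgebra.sum_mem _ fun i _ => Subalgebra.sum_mem _ fun j _ =>
    Subalgebra.smul_mem _ (Subalgebra.mul_mem _ (pderivOn_mem_constCoeffDiffOps S i)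
      (pderivOn_mem_constCoeffDiffOps T j)) _

theorem pderivOn_union [DecidableEq ι] {S T : Finset ι} (h : Disjoint S T) (i : σ) :
    pderivOn (R := R) (S ∪ T) i = pderivOn S i + pderivOn T i :=
  sum_union h

theorem poissonOp_union_left [Fintype σ] [DecidableEq ι] (π : σ → σ → R) {S S' : Finset ι}
    (h : Disjoint S S') (T : Finset ι) :
    poissonOp π (S ∪ S') T = poissonOp π S T + poissonOp π S' T := by
  simp only [poissonOp, pderivOn_union h, add_mul, smul_add, sum_add_distrib]

theorem poissonOp_union_right [Fintype σ] [DecidableEq ι] (π : σ → σ → R) (S : Finset ι)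
    {T T' : Finset ι} (h : Disjoint T T') :
    poissonOp π S (T ∪ T') = poissonOp π S T + poissonOp π S T' := by
  simp only [poissonOp, pderivOn_union h, mul_add, smul_add, sum_add_distrib]

namespace DependsOnlyOn

variable {S T : Finset ι} {K L : MvPolynomial (ι × σ) R}

theorem embed (s : ι) (f : MvPolynomial σ R) : DependsOnlyOn {s} (embed s f) := by
  intro t ht i
  refine pderiv_eq_zero_of_notMem_vars fun hmem => ht ?_
  obtain ⟨j, _, hj⟩ := mem_vars_rename _ _ hmem
  exact mem_singleton.mpr (congrArg Prod.fst hj).symm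

theorem mul [DecidableEq ι] (hK : DependsOnlyOn S K) (hL : DependsOnlyOn T L) :
    DependsOnlyOn (S ∪ T) (K * L) := by
  intro s hs i
  rw [mem_union, not_or] at hs
  rw [pderiv_mul, hK s hs.1, hL s hs.2, zero_mul, mul_zero, add_zero]

theorem pderivOn_eq_zero (hK : DependsOnlyOn S K) (hTS : Disjoint T S) (i : σ) :
    pderivOn T i K = 0 := by
  rw [pderivOn_apply]
  exact sum_eq_zero fun t ht => hK t (disjoint_left.mp hTS ht) i

theorem map {A : Module.End R (MvPolynomial (ι × σ) R)} (hK : DependsOnlyOn S K)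
    (hA : A ∈ constCoeffDiffOps R (ι × σ)) : DependsOnlyOn S (A K) := by
  intro s hs i
  have hcomm := LinearMap.congr_fun (commute_pderiv_of_mem_constCoeffDiffOps hA (s, i)).eq K
  simp only [Module.End.mul_apply, Derivation.coeFn_coe] at hcomm
  rw [hcomm, hK s hs i, map_zero]

end DependsOnlyOn

section Products

variable {S T U : Finset ι} {K L M : MvPolynomial (ι × σ) R}

theorem pderivOn_mul_of_dependsOnlyOn (hTU : Disjoint T U) (hM : DependsOnlyOn U M) (j : σ)
    (G : MvPolynomial (ι × σ) R) : pderivOn T j (G * M) = pderivOn T j G * M := by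
  rw [pderivOn_mul, hM.pderivOn_eq_zero hTU, mul_zero, add_zero]

theorem commute_poissonOp_mulRight [Fintype σ] (π : σ → σ → R) (hSU : Disjoint S U)
    (hTU : Disjoint T U) (hM : DependsOnlyOn U M) :
    Commute (poissonOp π S T) (LinearMap.mulRight R M) := by
  have hcomm : ∀ {V : Finset ι}, Disjoint V U → ∀ i,
      Commute (pderivOn V i) (LinearMap.mulRight R M) := fun hVU i =>
    LinearMap.ext fun G => pderivOn_mul_of_dependsOnlyOn hVU hM i G
  exact Commute.sum_left _ _ _ fun i _ => Commute.sum_left _ _ _ fun j _ =>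
    ((hcomm hSU i).mul_left (hcomm hTU j)).smul_left _

theorem poissonOp_mul [Fintype σ] (π : σ → σ → R) (hST : Disjoint S T)
    (hK : DependsOnlyOn S K) (hL : DependsOnlyOn T L) :
    poissonOp π S T (K * L) = ∑ i, ∑ j, π i j • (pderivOn S i K * pderivOn T j L) := by
  simp only [poissonOp, LinearMap.sum_apply, LinearMap.smul_apply, Module.End.mul_apply]
  refine sum_congr rfl fun i _ => sum_congr rfl fun j _ => ?_
  rw [mul_comm K, pderivOn_mul_of_dependsOnlyOn hST.symm hK, mul_comm,
    pderivOn_mul_of_dependsOnlyOn hST (hL.map (pderivOn_mem_constCoeffDiffOps T j))]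

end Products

theorem merge_embed (s : ι) (f : MvPolynomial σ R) : merge (embed s f) = f := by
  rw [merge, embed, rename_rename]
  exact rename_id_apply f

theorem merge_X (s : ι) (i : σ) : merge (X (s, i) : MvPolynomial (ι × σ) R) = X i :=
  rename_X _ _

theorem pderiv_merge [Fintype ι] (i : σ) (K : MvPolynomial (ι × σ) R) :
    pderiv i (merge K) = merge (pderivOn univ i K) := by
  induction K using MvPolynomial.induction_on with
  | C a => simp only [algHom_C, algebraMap_eq, pderiv_C, pderivOn_apply, sum_const_zero, map_zero]
  | add p q hp hq => simp only [map_add, hp, hq]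
  | mul_X p q hp =>
    obtain ⟨s, j⟩ := q
    have hX : merge (pderivOn univ i (X (s, j))) = pderiv i (X j : MvPolynomial σ R) := by
      rw [pderivOn_apply, sum_eq_single s
        (fun t _ ht => pderiv_X_of_ne fun h => ht (congrArg Prod.fst h).symm) (by simp)]
      by_cases hj : j = i
      · rw [hj, pderiv_X_self, pderiv_X_self, map_one]
      · rw [pderiv_X_of_ne hj, pderiv_X_of_ne fun h => hj (congrArg Prod.snd h), map_zero]
    rw [pderivOn_mul, map_mul, merge_X, pderiv_mul, hp, map_add, map_mul, map_mul, merge_X, hX]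

theorem DependsOnlyOn.pderiv_merge [Fintype ι] {S : Finset ι} {K : MvPolynomial (ι × σ) R}
    (hK : DependsOnlyOn S K) (i : σ) : pderiv i (merge K) = merge (pderivOn S i K) := by
  rw [MoyalWeyl.pderiv_merge, pderivOn_apply, pderivOn_apply,
    sum_subset (subset_univ S) fun s _ hs => hK s hs i]

end MoyalWeyl

open MoyalWeyl

section Moyal

variable {n : ℕ}

theorem pdSeqP_zero (l : List (Fin n)) : pdSeqP l 0 = 0 := by
  induction l with
  | nil => rfl
  | cons i l ih => rw [pdSeqP, ih, map_zero]

theorem pdSeqP_append_singleton (l : List (Fin n)) (i : Fin n) (f : MvPolynomial (Fin n) ℝ) :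
    pdSeqP (l ++ [i]) f = pdSeqP l (pderiv i f) := by
  induction l with
  | nil => rfl
  | cons j l ih => rw [List.cons_append, pdSeqP, ih, pdSeqP]

noncomputable def moyalSum (π : Fin n → Fin n → ℝ) (k : ℕ) (f g : MvPolynomial (Fin n) ℝ) :
    MvPolynomial (Fin n) ℝ :=
  ∑ I : Fin k → Fin n, ∑ J : Fin k → Fin n,
    C (∏ l : Fin k, π (I l) (J l)) * pdSeqP (List.ofFn I) f * pdSeqP (List.ofFn J) g

variable (π : Fin n → Fin n → ℝ)

theorem moyalP_eq_moyalSum (k : ℕ) (f g : MvPolynomial (Fin n) ℝ) :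
    moyalP π k f g = C (1 / (k.factorial : ℝ)) * moyalSum π k f g :=
  rfl

theorem moyalSum_zero (f g : MvPolynomial (Fin n) ℝ) : moyalSum π 0 f g = f * g := by
  simp [moyalSum, pdSeqP]

theorem moyalSum_succ (k : ℕ) (f g : MvPolynomial (Fin n) ℝ) :
    moyalSum π (k + 1) f g =
      ∑ i, ∑ j, C (π i j) * moyalSum π k (pderiv i f) (pderiv j g) := by
  simp only [moyalSum, Fin.sum_pi_succ_eq_sum_snoc, mul_sum, Fin.prod_univ_castSucc,
    Fin.snoc_castSucc, Fin.snoc_last, List.ofFn_succ', List.concat_eq_append,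
    pdSeqP_append_singleton]
  refine sum_congr rfl fun i _ => ?_
  rw [sum_comm]
  refine sum_congr rfl fun j _ => sum_congr rfl fun I _ => sum_congr rfl fun J _ => ?_
  rw [C_mul]
  ring

theorem moyalSum_merge {ι : Type*} [Fintype ι] {S T : Finset ι} (hST : Disjoint S T) (k : ℕ)
    {K L : MvPolynomial (ι × Fin n) ℝ} (hK : DependsOnlyOn S K) (hL : DependsOnlyOn T L) :
    moyalSum π k (merge K) (merge L) = merge ((poissonOp π S T ^ k) (K * L)) := by
  induction k generalizing K L with
  | zero => rw [moyalSum_zero, pow_zero, Module.End.one_apply, map_mul]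
  | succ k ih =>
    rw [moyalSum_succ, pow_succ, Module.End.mul_apply, poissonOp_mul π hST hK hL]
    simp only [map_sum, map_smul]
    simp only [hK.pderiv_merge, hL.pderiv_merge, smul_eq_C_mul,
      ih (hK.map (pderivOn_mem_constCoeffDiffOps S _))
        (hL.map (pderivOn_mem_constCoeffDiffOps T _))]

theorem moyalP_merge {ι : Type*} [Fintype ι] {S T : Finset ι} (hST : Disjoint S T) (k : ℕ)
    {K L : MvPolynomial (ι × Fin n) ℝ} (hK : DependsOnlyOn S K) (hL : DependsOnlyOn T L) :
    moyalP π k (merge K) (merge L) =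
      merge (((k.factorial : ℝ)⁻¹ • poissonOp π S T ^ k) (K * L)) := by
  rw [moyalP_eq_moyalSum, moyalSum_merge π hST k hK hL, LinearMap.smul_apply, map_smul,
    smul_eq_C_mul, one_div]

theorem moyalSum_zero_left (k : ℕ) (g : MvPolynomial (Fin n) ℝ) : moyalSum π k 0 g = 0 := by
  simp only [moyalSum, pdSeqP_zero, mul_zero, zero_mul, sum_const_zero]

theorem moyalSum_zero_right (k : ℕ) (f : MvPolynomial (Fin n) ℝ) : moyalSum π k f 0 = 0 := by
  simp only [moyalSum, pdSeqP_zero, mul_zero, sum_const_zero]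

theorem moyalP_zero (f g : MvPolynomial (Fin n) ℝ) : moyalP π 0 f g = f * g := by
  rw [moyalP_eq_moyalSum, moyalSum_zero, Nat.factorial_zero, Nat.cast_one, div_one, C_1, one_mul]

theorem moyalP_one (f g : MvPolynomial (Fin n) ℝ) :
    moyalP π 1 f g = ∑ i, ∑ j, C (π i j) * pderiv i f * pderiv j g := by
  simp only [moyalP_eq_moyalSum, moyalSum_succ, moyalSum_zero, Nat.factorial_one, Nat.cast_one,
    div_one, C_1, one_mul, mul_assoc]

theorem moyalP_succ_one_left (k : ℕ) (f : MvPolynomial (Fin n) ℝ) : moyalP π (k + 1) 1 f = 0 := by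
  simp only [moyalP_eq_moyalSum, moyalSum_succ, pderiv_one, moyalSum_zero_left, mul_zero,
    sum_const_zero]

theorem moyalP_succ_one_right (k : ℕ) (f : MvPolynomial (Fin n) ℝ) :
    moyalP π (k + 1) f 1 = 0 := by
  simp only [moyalP_eq_moyalSum, moyalSum_succ, pderiv_one, moyalSum_zero_right, mul_zero,
    sum_const_zero]

theorem starP_one_left (f : MvPolynomial (Fin n) ℝ) : starP π 1 f = PowerSeries.C f := by
  ext (_ | k)
  · rw [starP, PowerSeries.coeff_mk, PowerSeries.coeff_C, if_pos rfl, moyalP_zero, one_mul]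
  · rw [starP, PowerSeries.coeff_mk, PowerSeries.coeff_C, if_neg k.succ_ne_zero,
      moyalP_succ_one_left]

theorem starP_one_right (f : MvPolynomial (Fin n) ℝ) : starP π f 1 = PowerSeries.C f := by
  ext (_ | k)
  · rw [starP, PowerSeries.coeff_mk, PowerSeries.coeff_C, if_pos rfl, moyalP_zero, mul_one]
  · rw [starP, PowerSeries.coeff_mk, PowerSeries.coeff_C, if_neg k.succ_ne_zero,
      moyalP_succ_one_right]

theorem moyalP_one_sub_moyalP_one (hanti : ∀ i j, π i j = -π j i) (f g : MvPolynomial (Fin n) ℝ) :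
    moyalP π 1 f g - moyalP π 1 g f =
      C 2 * ∑ i, ∑ j, C (π i j) * pderiv i f * pderiv j g := by
  have hswap : moyalP π 1 g f = -∑ i, ∑ j, C (π i j) * pderiv i f * pderiv j g := by
    rw [moyalP_one, sum_comm, ← sum_neg_distrib]
    refine sum_congr rfl fun i _ => ?_
    rw [← sum_neg_distrib]
    refine sum_congr rfl fun j _ => ?_
    rw [hanti, map_neg]
    ring
  rw [hswap, moyalP_one, sub_neg_eq_add, ← two_mul, map_ofNat]

section Triple

variable {ι : Type*} [Fintype ι] [DecidableEq ι] {S T U : Finset ι}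
  {K L M : MvPolynomial (ι × Fin n) ℝ}

theorem moyalP_moyalP_merge_left (hST : Disjoint S T) (hSU : Disjoint S U) (hTU : Disjoint T U)
    (hK : DependsOnlyOn S K) (hL : DependsOnlyOn T L) (hM : DependsOnlyOn U M) (a b : ℕ) :
    moyalP π b (moyalP π a (merge K) (merge L)) (merge M) =
      merge ((((b.factorial : ℝ)⁻¹ • (poissonOp π S U + poissonOp π T U) ^ b) *
        ((a.factorial : ℝ)⁻¹ • poissonOp π S T ^ a)) (K * L * M)) := by
  have hKL : DependsOnlyOn (S ∪ T) (((a.factorial : ℝ)⁻¹ • poissonOp π S T ^ a) (K * L)) :=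
    (hK.mul hL).map <| Subalgebra.smul_mem _ (Subalgebra.pow_mem _
      (poissonOp_mem_constCoeffDiffOps π S T) a) _
  have hcomm := ((commute_poissonOp_mulRight π hSU hTU hM).pow_left a).smul_left
    (a.factorial : ℝ)⁻¹
  rw [moyalP_merge π hST a hK hL, moyalP_merge π (disjoint_union_left.mpr ⟨hSU, hTU⟩) b hKL hM,
    poissonOp_union_left π hST, Module.End.mul_apply]
  congr 2
  exact (LinearMap.congr_fun hcomm.eq (K * L)).symm

theorem moyalP_moyalP_merge_right (hST : Disjoint S T) (hSU : Disjoint S U) (hTU : Disjoint T U)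
    (hK : DependsOnlyOn S K) (hL : DependsOnlyOn T L) (hM : DependsOnlyOn U M) (a b : ℕ) :
    moyalP π b (merge K) (moyalP π a (merge L) (merge M)) =
      merge ((((b.factorial : ℝ)⁻¹ • (poissonOp π S T + poissonOp π S U) ^ b) *
        ((a.factorial : ℝ)⁻¹ • poissonOp π T U ^ a)) (K * L * M)) := by
  have hLM : DependsOnlyOn (T ∪ U) (((a.factorial : ℝ)⁻¹ • poissonOp π T U ^ a) (L * M)) :=
    (hL.mul hM).map <| Subalgebra.smul_mem _ (Subalgebra.pow_mem _
      (poissonOp_mem_constCoeffDiffOps π T U) a) _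
  have hcomm := ((commute_poissonOp_mulRight π hST.symm hSU.symm hK).pow_left a).smul_left
    (a.factorial : ℝ)⁻¹
  rw [moyalP_merge π hTU a hL hM, moyalP_merge π (disjoint_union_right.mpr ⟨hST, hSU⟩) b hK hLM,
    poissonOp_union_right π S hTU, Module.End.mul_apply, mul_assoc, mul_comm K, mul_comm K (L * M)]
  congr 2
  exact (LinearMap.congr_fun hcomm.eq (L * M)).symm

end Triple

theorem moyalP_assoc (f g h : MvPolynomial (Fin n) ℝ) (l : ℕ) :
    ∑ p ∈ antidiagonal l, moyalP π p.2 (moyalP π p.1 f g) h =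
      ∑ p ∈ antidiagonal l, moyalP π p.2 f (moyalP π p.1 g h) := by
  set X := poissonOp π ({0} : Finset (Fin 3)) {1}
  set Y := poissonOp π ({0} : Finset (Fin 3)) {2}
  set Z := poissonOp π ({1} : Finset (Fin 3)) {2}
  set F := embed (0 : Fin 3) f * embed 1 g * embed 2 h
  have hX := poissonOp_mem_constCoeffDiffOps π ({0} : Finset (Fin 3)) {1}
  have hY := poissonOp_mem_constCoeffDiffOps π ({0} : Finset (Fin 3)) {2}
  have hZ := poissonOp_mem_constCoeffDiffOps π ({1} : Finset (Fin 3)) {2}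
  have hexp : ∀ {A B : Module.End ℝ (MvPolynomial (Fin 3 × Fin n) ℝ)}, Commute A B →
      ∑ p ∈ antidiagonal l,
        merge ((((p.2.factorial : ℝ)⁻¹ • B ^ p.2) * ((p.1.factorial : ℝ)⁻¹ • A ^ p.1)) F) =
      merge (((l.factorial : ℝ)⁻¹ • (B + A) ^ l) F) := by
    intro A B hAB
    rw [← hAB.symm.inv_factorial_smul_add_pow, LinearMap.sum_apply, map_sum]
    conv_rhs => rw [← Nat.sum_antidiagonal_swap]
    rfl
  have hleft := moyalP_moyalP_merge_left π (by decide) (by decide) (by decide)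
    (.embed (0 : Fin 3) f) (.embed 1 g) (.embed 2 h)
  have hright := moyalP_moyalP_merge_right π (by decide) (by decide) (by decide)
    (.embed (0 : Fin 3) f) (.embed 1 g) (.embed 2 h)
  simp only [merge_embed] at hleft hright
  calc ∑ p ∈ antidiagonal l, moyalP π p.2 (moyalP π p.1 f g) h
      = merge (((l.factorial : ℝ)⁻¹ • (Y + Z + X) ^ l) F) := by
        simp only [hleft]
        exact hexp (commute_of_mem_constCoeffDiffOps hX (add_mem hY hZ))
    _ = merge (((l.factorial : ℝ)⁻¹ • (X + Y + Z) ^ l) F) := by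
        rw [add_comm (Y + Z), add_assoc]
    _ = ∑ p ∈ antidiagonal l, moyalP π p.2 f (moyalP π p.1 g h) := by
        simp only [hright]
        exact (hexp (commute_of_mem_constCoeffDiffOps hZ (add_mem hX hY))).symm

end Moyal

/-- On `ℝ[x_1,…,x_n]` the Moyal–Weyl star product associated with a constant
antisymmetric matrix `π` is a formal star product:
(i) it is associative (stated coefficientwise in `t`, with the star product
extended `t`-linearly, so the `t^l`-coefficient of `(f⋆g)⋆h` is
`Σ_{a+b=l} m_b(m_a(f,g),h)`);
(ii) `m_0(f,g) = f·g`;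
(iii) `1 ⋆ f = f = f ⋆ 1`;
(iv) the `t`-coefficient of `f ⋆ g − g ⋆ f` is `2 Σ_{i,j} π^{ij} ∂_i f ∂_j g`. -/
theorem moyalP_formal_star_product {n : ℕ} (π : Fin n → Fin n → ℝ)
    (hanti : ∀ i j, π i j = - π j i) :
    (∀ f g h : MvPolynomial (Fin n) ℝ, ∀ l : ℕ,
        ∑ p ∈ Finset.HasAntidiagonal.antidiagonal l, moyalP π p.2 (moyalP π p.1 f g) h
      = ∑ p ∈ Finset.HasAntidiagonal.antidiagonal l, moyalP π p.2 f (moyalP π p.1 g h)) ∧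
    (∀ f g : MvPolynomial (Fin n) ℝ, moyalP π 0 f g = f * g) ∧
    (∀ f : MvPolynomial (Fin n) ℝ,
        starP π 1 f = PowerSeries.C (R := MvPolynomial (Fin n) ℝ) f ∧
        starP π f 1 = PowerSeries.C (R := MvPolynomial (Fin n) ℝ) f) ∧
    (∀ f g : MvPolynomial (Fin n) ℝ,
        moyalP π 1 f g - moyalP π 1 g f
      = MvPolynomial.C 2 * ∑ i : Fin n, ∑ j : Fin n,
          MvPolynomial.C (π i j) * MvPolynomial.pderiv i f * MvPolynomial.pderiv j g) :=
  ⟨moyalP_assoc π, moyalP_zero π, fun f => ⟨starP_one_left π f, starP_one_right π f⟩,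
    moyalP_one_sub_moyalP_one π hanti⟩
end

section
/- For the strong-constraint solution ∂̃ = π∂ of Double Field Theory, the gauge algebra closes on scalars via the C-bracket: for doubled vectors V, W with smooth components on ℝ^n (with π a constant antisymmetric n×n matrix and ∂̃^i := Σ_j π^{ij} ∂_j), and every smooth scalar φ : ℝ^n → ℝ, one has 𝓛_V (𝓛_W φ) − 𝓛_W (𝓛_V φ) = 𝓛_{[V,W]_C} φ. -/
/-- Partial derivative in the `i`-th coordinate direction on `ℝ^n`. -/
noncomputable def pd {n : ℕ} (i : Fin n) (f : (Fin n → ℝ) → ℝ) : (Fin n → ℝ) → ℝ :=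
  fun x => fderiv ℝ f x (Pi.single i 1)

/-- The winding derivative `∂̃^i f := Σ_j π^{ij} ∂_j f` (strong-constraint solution
`∂̃ = π∂`). -/
noncomputable def tpd {n : ℕ} (π : Fin n → Fin n → ℝ) (i : Fin n)
    (f : (Fin n → ℝ) → ℝ) : (Fin n → ℝ) → ℝ :=
  fun x => ∑ j : Fin n, π i j * pd j f x

/-- Doubled contraction `Σ_K V^K ∂_K f = Σ_i (V^i ∂_i f + V_i ∂̃^i f)`; this is also
the generalized Lie derivative `𝓛_V f` of a scalar. -/
noncomputable def dirDer {n : ℕ} (π : Fin n → Fin n → ℝ)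
    (Vup Vlo : Fin n → (Fin n → ℝ) → ℝ) (f : (Fin n → ℝ) → ℝ) (x : Fin n → ℝ) : ℝ :=
  ∑ i : Fin n, (Vup i x * pd i f x + Vlo i x * tpd π i f x)

/-- Upper components of the C-bracket:
`([V,W]_C)^i = Σ_K [V^K ∂_K W^i − W^K ∂_K V^i] − ½ Σ_K [V^K ∂̃^i W_K − W^K ∂̃^i V_K]`. -/
noncomputable def cUp {n : ℕ} (π : Fin n → Fin n → ℝ)
    (Vup Vlo Wup Wlo : Fin n → (Fin n → ℝ) → ℝ) (i : Fin n) (x : Fin n → ℝ) : ℝ :=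
  dirDer π Vup Vlo (Wup i) x - dirDer π Wup Wlo (Vup i) x
    - (1 / 2) * ∑ k : Fin n,
        (Vup k x * tpd π i (Wlo k) x + Vlo k x * tpd π i (Wup k) x
          - Wup k x * tpd π i (Vlo k) x - Wlo k x * tpd π i (Vup k) x)

/-- Lower components of the C-bracket:
`([V,W]_C)_i = Σ_K [V^K ∂_K W_i − W^K ∂_K V_i] − ½ Σ_K [V^K ∂_i W_K − W^K ∂_i V_K]`. -/
noncomputable def cLo {n : ℕ} (π : Fin n → Fin n → ℝ)
    (Vup Vlo Wup Wlo : Fin n → (Fin n → ℝ) → ℝ) (i : Fin n) (x : Fin n → ℝ) : ℝ :=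
  dirDer π Vup Vlo (Wlo i) x - dirDer π Wup Wlo (Vlo i) x
    - (1 / 2) * ∑ k : Fin n,
        (Vup k x * pd i (Wlo k) x + Vlo k x * pd i (Wup k) x
          - Wup k x * pd i (Vlo k) x - Wlo k x * pd i (Vup k) x)

section DFTAux

open Finset

variable {n : ℕ}

lemma pd_smooth {f : (Fin n → ℝ) → ℝ} (hf : ContDiff ℝ (⊤ : ℕ∞) f) (i : Fin n) :
    ContDiff ℝ (⊤ : ℕ∞) (pd i f) :=
  (hf.fderiv_right (by simp)).clm_apply contDiff_const

lemma dAt {f : (Fin n → ℝ) → ℝ} (hf : ContDiff ℝ (⊤ : ℕ∞) f) {x : Fin n → ℝ} :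
    DifferentiableAt ℝ f x :=
  (hf.differentiable (by simp)).differentiableAt

lemma pd_add {f g : (Fin n → ℝ) → ℝ} {x : Fin n → ℝ}
    (hf : DifferentiableAt ℝ f x) (hg : DifferentiableAt ℝ g x) (i : Fin n) :
    pd i (fun y => f y + g y) x = pd i f x + pd i g x := by
  unfold pd; rw [fderiv_fun_add hf hg]; simp

lemma pd_sum {F : Fin n → (Fin n → ℝ) → ℝ} {x : Fin n → ℝ}
    (hF : ∀ j, DifferentiableAt ℝ (F j) x) (i : Fin n) :
    pd i (fun y => ∑ j : Fin n, F j y) x = ∑ j : Fin n, pd i (F j) x := by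
  unfold pd; rw [fderiv_fun_sum (fun j _ => hF j)]; simp

lemma pd_mul {f g : (Fin n → ℝ) → ℝ} {x : Fin n → ℝ}
    (hf : DifferentiableAt ℝ f x) (hg : DifferentiableAt ℝ g x) (i : Fin n) :
    pd i (fun y => f y * g y) x = pd i f x * g x + f x * pd i g x := by
  unfold pd; rw [fderiv_fun_mul hf hg]; simp; ring

lemma pd_mul_const {f : (Fin n → ℝ) → ℝ} {x : Fin n → ℝ}
    (hf : DifferentiableAt ℝ f x) (c : ℝ) (i : Fin n) :
    pd i (fun y => f y * c) x = pd i f x * c := by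
  unfold pd; rw [fderiv_mul_const hf]; simp; ring

lemma pd_comm {f : (Fin n → ℝ) → ℝ} (hf : ContDiff ℝ (⊤ : ℕ∞) f) (i j : Fin n) (x : Fin n → ℝ) :
    pd i (pd j f) x = pd j (pd i f) x := by
  have hsym : IsSymmSndFDerivAt ℝ f x := hf.contDiffAt.isSymmSndFDerivAt (by rw [minSmoothness_of_isRCLikeNormedField]; exact WithTop.coe_le_coe.mpr le_top)
  have hd : DifferentiableAt ℝ (fderiv ℝ f) x :=
    ((hf.fderiv_right (m := (⊤ : ℕ∞)) (by simp)).differentiable (by simp)).differentiableAt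
  have key : ∀ a b : Fin n,
      pd a (pd b f) x = fderiv ℝ (fderiv ℝ f) x (Pi.single a 1) (Pi.single b 1) := by
    intro a b
    show fderiv ℝ (fun y => (fderiv ℝ f y) (Pi.single b 1)) x (Pi.single a 1) = _
    rw [fderiv_clm_apply hd (differentiableAt_const _)]
    simp
  rw [key, key, hsym.eq]

/-- Combined vector field `A^j = V^j + Σ_i V_i π^{ij}`. -/
noncomputable def Af (π : Fin n → Fin n → ℝ) (Vup Vlo : Fin n → (Fin n → ℝ) → ℝ)
    (j : Fin n) : (Fin n → ℝ) → ℝ :=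
  fun x => Vup j x + ∑ i : Fin n, Vlo i x * π i j

lemma Af_smooth {π : Fin n → Fin n → ℝ} {Vup Vlo : Fin n → (Fin n → ℝ) → ℝ}
    (hVup : ∀ i, ContDiff ℝ (⊤ : ℕ∞) (Vup i)) (hVlo : ∀ i, ContDiff ℝ (⊤ : ℕ∞) (Vlo i)) (j : Fin n) :
    ContDiff ℝ (⊤ : ℕ∞) (Af π Vup Vlo j) :=
  (hVup j).add (ContDiff.sum fun i _ => (hVlo i).mul contDiff_const)

lemma dirDer_eq (π : Fin n → Fin n → ℝ) (Vup Vlo : Fin n → (Fin n → ℝ) → ℝ)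
    (f : (Fin n → ℝ) → ℝ) (x : Fin n → ℝ) :
    dirDer π Vup Vlo f x = ∑ j : Fin n, Af π Vup Vlo j x * pd j f x := by
  unfold dirDer tpd Af
  simp only [add_mul, Finset.sum_add_distrib, Finset.mul_sum, Finset.sum_mul]
  congr 1
  rw [Finset.sum_comm]
  exact Finset.sum_congr rfl fun j _ => Finset.sum_congr rfl fun i _ => by ring

lemma pd_Af {π : Fin n → Fin n → ℝ} {Vup Vlo : Fin n → (Fin n → ℝ) → ℝ}
    (hVup : ∀ i, ContDiff ℝ (⊤ : ℕ∞) (Vup i)) (hVlo : ∀ i, ContDiff ℝ (⊤ : ℕ∞) (Vlo i))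
    (k j : Fin n) (x : Fin n → ℝ) :
    pd k (Af π Vup Vlo j) x = pd k (Vup j) x + ∑ i : Fin n, pd k (Vlo i) x * π i j := by
  have h2 : ∀ i : Fin n, DifferentiableAt ℝ (fun y => Vlo i y * π i j) x :=
    fun i => (dAt (hVlo i)).mul_const _
  have : pd k (Af π Vup Vlo j) x
      = pd k (Vup j) x + pd k (fun y => ∑ i : Fin n, Vlo i y * π i j) x :=
    pd_add (dAt (hVup j)) (DifferentiableAt.fun_sum fun i _ => h2 i) k
  rw [this, pd_sum h2]
  congr 1
  exact Finset.sum_congr rfl fun i _ => pd_mul_const (dAt (hVlo i)) _ k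

lemma sum_A_pdA (π : Fin n → Fin n → ℝ) {Vup Vlo Wup Wlo : Fin n → (Fin n → ℝ) → ℝ}
    (hWup : ∀ i, ContDiff ℝ (⊤ : ℕ∞) (Wup i)) (hWlo : ∀ i, ContDiff ℝ (⊤ : ℕ∞) (Wlo i))
    (j : Fin n) (x : Fin n → ℝ) :
    ∑ k : Fin n, Af π Vup Vlo k x * pd k (Af π Wup Wlo j) x
      = dirDer π Vup Vlo (Wup j) x + ∑ i : Fin n, dirDer π Vup Vlo (Wlo i) x * π i j := by
  have h : ∀ k : Fin n, pd k (Af π Wup Wlo j) x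
      = pd k (Wup j) x + ∑ i : Fin n, pd k (Wlo i) x * π i j :=
    fun k => pd_Af hWup hWlo k j x
  simp only [h, mul_add, Finset.mul_sum, Finset.sum_add_distrib]
  congr 1
  · exact (dirDer_eq π Vup Vlo (Wup j) x).symm
  · rw [Finset.sum_comm]
    refine Finset.sum_congr rfl fun i _ => ?_
    rw [dirDer_eq π Vup Vlo (Wlo i) x, Finset.sum_mul]
    exact Finset.sum_congr rfl fun k _ => by ring

lemma lie_eq (π : Fin n → Fin n → ℝ) {Vup Vlo B : Fin n → (Fin n → ℝ) → ℝ}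
    {φ : (Fin n → ℝ) → ℝ} (hB : ∀ j, ContDiff ℝ (⊤ : ℕ∞) (B j)) (hφ : ContDiff ℝ (⊤ : ℕ∞) φ)
    (x : Fin n → ℝ) :
    dirDer π Vup Vlo (fun y => ∑ j : Fin n, B j y * pd j φ y) x
      = ∑ k : Fin n, ∑ j : Fin n, (Af π Vup Vlo k x * pd k (B j) x * pd j φ x
          + Af π Vup Vlo k x * B j x * pd k (pd j φ) x) := by
  rw [dirDer_eq]
  refine Finset.sum_congr rfl fun k _ => ?_
  rw [pd_sum (F := fun j y => B j y * pd j φ y) (fun j => (dAt (hB j)).mul (dAt (pd_smooth hφ j))) k, Finset.mul_sum]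
  refine Finset.sum_congr rfl fun j _ => ?_
  rw [pd_mul (dAt (hB j)) (dAt (pd_smooth hφ j)) k]
  ring

end DFTAux

/-- For the strong-constraint solution `∂̃ = π∂` of DFT, the gauge algebra closes
on scalars via the C-bracket: `𝓛_V (𝓛_W φ) − 𝓛_W (𝓛_V φ) = 𝓛_{[V,W]_C} φ`. -/
theorem gauge_closure_scalar {n : ℕ} (π : Fin n → Fin n → ℝ)
    (hanti : ∀ i j, π i j = - π j i)
    (Vup Vlo Wup Wlo : Fin n → (Fin n → ℝ) → ℝ)
    (hVup : ∀ i, ContDiff ℝ (⊤ : ℕ∞) (Vup i)) (hVlo : ∀ i, ContDiff ℝ (⊤ : ℕ∞) (Vlo i))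
    (hWup : ∀ i, ContDiff ℝ (⊤ : ℕ∞) (Wup i)) (hWlo : ∀ i, ContDiff ℝ (⊤ : ℕ∞) (Wlo i))
    (φ : (Fin n → ℝ) → ℝ) (hφ : ContDiff ℝ (⊤ : ℕ∞) φ) :
    ∀ x, dirDer π Vup Vlo (fun y => dirDer π Wup Wlo φ y) x
      - dirDer π Wup Wlo (fun y => dirDer π Vup Vlo φ y) x
      = ∑ i : Fin n, (cUp π Vup Vlo Wup Wlo i x * pd i φ x
          + cLo π Vup Vlo Wup Wlo i x * tpd π i φ x) := by
  intro x
  have hAVs : ∀ j, ContDiff ℝ (⊤ : ℕ∞) (Af π Vup Vlo j) := fun j => Af_smooth hVup hVlo j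
  have hAWs : ∀ j, ContDiff ℝ (⊤ : ℕ∞) (Af π Wup Wlo j) := fun j => Af_smooth hWup hWlo j
  rw [show (fun y => dirDer π Wup Wlo φ y)
        = (fun y => ∑ j : Fin n, Af π Wup Wlo j y * pd j φ y) from
      funext fun y => dirDer_eq π Wup Wlo φ y,
    show (fun y => dirDer π Vup Vlo φ y)
        = (fun y => ∑ j : Fin n, Af π Vup Vlo j y * pd j φ y) from
      funext fun y => dirDer_eq π Vup Vlo φ y,
    lie_eq π hAWs hφ x, lie_eq π hAVs hφ x]
  have R : ∑ i : Fin n, (cUp π Vup Vlo Wup Wlo i x * pd i φ x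
        + cLo π Vup Vlo Wup Wlo i x * tpd π i φ x)
      = ∑ j : Fin n, (cUp π Vup Vlo Wup Wlo j x
          + ∑ i : Fin n, cLo π Vup Vlo Wup Wlo i x * π i j) * pd j φ x := by
    simp only [tpd, add_mul, Finset.sum_add_distrib, Finset.mul_sum, Finset.sum_mul]
    congr 1
    rw [Finset.sum_comm]
    exact Finset.sum_congr rfl fun j _ => Finset.sum_congr rfl fun i _ => by ring
  rw [R]
  have key : ∀ j : Fin n, cUp π Vup Vlo Wup Wlo j x
        + ∑ i : Fin n, cLo π Vup Vlo Wup Wlo i x * π i j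
      = ∑ k : Fin n, Af π Vup Vlo k x * pd k (Af π Wup Wlo j) x
        - ∑ k : Fin n, Af π Wup Wlo k x * pd k (Af π Vup Vlo j) x := by
    intro j
    rw [sum_A_pdA π hWup hWlo j x, sum_A_pdA π hVup hVlo j x]
    simp only [cUp, cLo]
    have split : ∑ i : Fin n, (dirDer π Vup Vlo (Wlo i) x - dirDer π Wup Wlo (Vlo i) x
          - 1 / 2 * ∑ k : Fin n, (Vup k x * pd i (Wlo k) x + Vlo k x * pd i (Wup k) x
              - Wup k x * pd i (Vlo k) x - Wlo k x * pd i (Vup k) x)) * π i j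
        = ∑ i : Fin n, dirDer π Vup Vlo (Wlo i) x * π i j
          - ∑ i : Fin n, dirDer π Wup Wlo (Vlo i) x * π i j
          - 1 / 2 * ∑ i : Fin n, (∑ k : Fin n,
              (Vup k x * pd i (Wlo k) x + Vlo k x * pd i (Wup k) x
                - Wup k x * pd i (Vlo k) x - Wlo k x * pd i (Vup k) x)) * π i j := by
      rw [Finset.mul_sum, ← Finset.sum_sub_distrib, ← Finset.sum_sub_distrib]
      exact Finset.sum_congr rfl fun i _ => by ring
    rw [split]
    have T1 : (∑ k : Fin n, (Vup k x * tpd π j (Wlo k) x + Vlo k x * tpd π j (Wup k) x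
          - Wup k x * tpd π j (Vlo k) x - Wlo k x * tpd π j (Vup k) x))
        = ∑ k : Fin n, ∑ i : Fin n,
            (Vup k x * (π j i * pd i (Wlo k) x) + Vlo k x * (π j i * pd i (Wup k) x)
              - Wup k x * (π j i * pd i (Vlo k) x) - Wlo k x * (π j i * pd i (Vup k) x)) := by
      refine Finset.sum_congr rfl fun k _ => ?_
      simp only [tpd, Finset.mul_sum, ← Finset.sum_add_distrib, ← Finset.sum_sub_distrib]
    have T2 : ∑ i : Fin n, (∑ k : Fin n,
          (Vup k x * pd i (Wlo k) x + Vlo k x * pd i (Wup k) x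
            - Wup k x * pd i (Vlo k) x - Wlo k x * pd i (Vup k) x)) * π i j
        = ∑ k : Fin n, ∑ i : Fin n,
            ((Vup k x * pd i (Wlo k) x + Vlo k x * pd i (Wup k) x
              - Wup k x * pd i (Vlo k) x - Wlo k x * pd i (Vup k) x) * π i j) := by
      simp only [Finset.sum_mul]
      exact Finset.sum_comm
    have S0 : (∑ k : Fin n, (Vup k x * tpd π j (Wlo k) x + Vlo k x * tpd π j (Wup k) x
          - Wup k x * tpd π j (Vlo k) x - Wlo k x * tpd π j (Vup k) x))
        + ∑ i : Fin n, (∑ k : Fin n,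
            (Vup k x * pd i (Wlo k) x + Vlo k x * pd i (Wup k) x
              - Wup k x * pd i (Vlo k) x - Wlo k x * pd i (Vup k) x)) * π i j = 0 := by
      rw [T1, T2, ← Finset.sum_add_distrib]
      refine Finset.sum_eq_zero fun k _ => ?_
      rw [← Finset.sum_add_distrib]
      refine Finset.sum_eq_zero fun i _ => ?_
      rw [hanti j i]; ring
    linear_combination (-1 / 2 : ℝ) * S0
  have R2 : ∑ j : Fin n, (cUp π Vup Vlo Wup Wlo j x
        + ∑ i : Fin n, cLo π Vup Vlo Wup Wlo i x * π i j) * pd j φ x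
      = ∑ j : Fin n, ∑ k : Fin n,
          (Af π Vup Vlo k x * pd k (Af π Wup Wlo j) x * pd j φ x
            - Af π Wup Wlo k x * pd k (Af π Vup Vlo j) x * pd j φ x) := by
    refine Finset.sum_congr rfl fun j _ => ?_
    rw [key j, sub_mul, Finset.sum_mul, Finset.sum_mul, ← Finset.sum_sub_distrib]
  rw [R2]
  have cancel : ∑ k : Fin n, ∑ j : Fin n,
        Af π Vup Vlo k x * Af π Wup Wlo j x * pd k (pd j φ) x
      = ∑ k : Fin n, ∑ j : Fin n,
        Af π Wup Wlo k x * Af π Vup Vlo j x * pd k (pd j φ) x := by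
    rw [Finset.sum_comm]
    exact Finset.sum_congr rfl fun k _ => Finset.sum_congr rfl fun j _ => by
      rw [pd_comm hφ]; ring
  have e1 : ∑ k : Fin n, ∑ j : Fin n,
        Af π Vup Vlo k x * pd k (Af π Wup Wlo j) x * pd j φ x
      = ∑ j : Fin n, ∑ k : Fin n,
        Af π Vup Vlo k x * pd k (Af π Wup Wlo j) x * pd j φ x := Finset.sum_comm
  have e2 : ∑ k : Fin n, ∑ j : Fin n,
        Af π Wup Wlo k x * pd k (Af π Vup Vlo j) x * pd j φ x
      = ∑ j : Fin n, ∑ k : Fin n,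
        Af π Wup Wlo k x * pd k (Af π Vup Vlo j) x * pd j φ x := Finset.sum_comm
  simp only [Finset.sum_add_distrib, Finset.sum_sub_distrib]
  linear_combination e1 - e2 + cancel
end
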